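/- For the majority rule, if E_t(Γ_1(i)) is final (not 101 or 010) and t ≤ n/2, then location i belongs to an interval of length at least 2t+1 of locations j all of which are final at time t, i.e., there exist a ≤ 0 ≤ b with b - a ≥ 2t such that for every offset d ∈ [a,b] the pattern (E_t(i+d-1), E_t(i+d), E_t(i+d+1)) is not 101 or 010. -/

import Mathlib

/-- The majority rule on bits. -/
def maj (a b c : Fin 2) : Fin 2 := if 2 ≤ a.val + b.val + c.val then 1 else 0

/-- A location `i` is final at configuration `σ` if its neighborhood pattern
is not 101 nor 010. -/
def MajFinal {n : ℕ} (σ : ZMod n → Fin 2) (i : ZMod n) : Prop :=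
  ¬((σ (i - 1), σ i, σ (i + 1)) = ((1 : Fin 2), (0 : Fin 2), (1 : Fin 2)) ∨
    (σ (i - 1), σ i, σ (i + 1)) = ((0 : Fin 2), (1 : Fin 2), (0 : Fin 2)))

/-!
After one majority step a cell is final exactly when one of the three cells around it was
final before; this is a check over the 32 patterns of its five-cell window. Iterating, a cell
is final at time `t` iff some cell within distance `t` of it was final at time `0`. So if `i`
is final at time `t`, witnessed by a cell `j` final at time `0` with `|i - j| ≤ t`, then every
cell within distance `t` of `j` is final at time `t`: an interval of length `2t + 1` through `i`.
-/

lemma majFinal_iff {n : ℕ} (σ : ZMod n → Fin 2) (i : ZMod n) :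
    MajFinal σ i ↔ σ (i - 1) = σ i ∨ σ i = σ (i + 1) := by
  unfold MajFinal
  generalize σ (i - 1) = p, σ i = q, σ (i + 1) = r
  revert p q r
  decide

lemma maj_window_final_iff : ∀ x₀ x₁ x₂ x₃ x₄ : Fin 2,
    (maj x₀ x₁ x₂ = maj x₁ x₂ x₃ ∨ maj x₁ x₂ x₃ = maj x₂ x₃ x₄) ↔
      (x₀ = x₁ ∨ x₁ = x₂) ∨ (x₁ = x₂ ∨ x₂ = x₃) ∨ (x₂ = x₃ ∨ x₃ = x₄) := by
  decide

lemma exists_abs_le_add_one_iff (Q : ℤ → Prop) (t : ℕ) :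
    (∃ e : ℤ, |e| ≤ t + 1 ∧ Q e) ↔ ∃ c : ℤ, |c| ≤ 1 ∧ ∃ e : ℤ, |e| ≤ t ∧ Q (c + e) := by
  constructor
  · rintro ⟨e, he, hQ⟩
    rw [abs_le] at he
    refine ⟨max (-1) (min 1 e), ?_, e - max (-1) (min 1 e), ?_, by rwa [add_sub_cancel]⟩ <;>
      rw [abs_le] <;> omega
  · rintro ⟨c, hc, e, he, hQ⟩
    refine ⟨c + e, ?_, hQ⟩
    rw [abs_le] at hc he ⊢
    omega

section

variable {n : ℕ} {E : ℕ → ZMod n → Fin 2}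

lemma majFinal_succ_iff
    (hE : ∀ t (i : ZMod n), E (t + 1) i = maj (E t (i - 1)) (E t i) (E t (i + 1)))
    (t : ℕ) (i : ZMod n) :
    MajFinal (E (t + 1)) i ↔ ∃ c : ℤ, |c| ≤ 1 ∧ MajFinal (E t) (i + c) := by
  have window : MajFinal (E (t + 1)) i ↔
      MajFinal (E t) (i - 1) ∨ MajFinal (E t) i ∨ MajFinal (E t) (i + 1) := by
    simp only [majFinal_iff, hE, sub_add_cancel, add_sub_cancel_right]
    exact maj_window_final_iff _ _ _ _ _
  simp only [window, Int.abs_le_one_iff, or_and_right, exists_or, exists_eq_left]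
  push_cast
  rw [add_zero, ← sub_eq_add_neg]
  tauto

lemma majFinal_iff_exists_abs_le
    (hE : ∀ t (i : ZMod n), E (t + 1) i = maj (E t (i - 1)) (E t i) (E t (i + 1)))
    (t : ℕ) (i : ZMod n) :
    MajFinal (E t) i ↔ ∃ e : ℤ, |e| ≤ t ∧ MajFinal (E 0) (i + e) := by
  induction t generalizing i with
  | zero => simp
  | succ t ih =>
    simp only [majFinal_succ_iff hE, ih, Nat.cast_succ, exists_abs_le_add_one_iff, Int.cast_add,
      add_assoc]

end

theorem maj_final_in_long_final_interval_general (n : ℕ)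
    (E : ℕ → ZMod n → Fin 2)
    (hE : ∀ t (i : ZMod n),
      E (t + 1) i = maj (E t (i - 1)) (E t i) (E t (i + 1)))
    (t : ℕ) (i : ZMod n) (h : MajFinal (E t) i) :
    ∃ a b : ℤ, a ≤ 0 ∧ 0 ≤ b ∧ (2 * t : ℤ) ≤ b - a ∧
      ∀ d : ℤ, a ≤ d → d ≤ b → MajFinal (E t) (i + (d : ZMod n)) := by
  obtain ⟨e, he, hinit⟩ := (majFinal_iff_exists_abs_le hE t i).1 h
  rw [abs_le] at he
  refine ⟨e - t, e + t, by omega, by omega, by omega, fun d hd₁ hd₂ => ?_⟩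
  refine (majFinal_iff_exists_abs_le hE t _).2 ⟨e - d, abs_le.2 ⟨by omega, by omega⟩, ?_⟩
  rwa [Int.cast_sub, add_add_sub_cancel]

theorem maj_final_in_long_final_interval (n : ℕ) (hn : 5 ≤ n)
    (E : ℕ → ZMod n → Fin 2)
    (hE : ∀ t (i : ZMod n),
      E (t + 1) i = maj (E t (i - 1)) (E t i) (E t (i + 1)))
    (t : ℕ) (ht : t ≤ n / 2) (i : ZMod n) (h : MajFinal (E t) i) :
    ∃ a b : ℤ, a ≤ 0 ∧ 0 ≤ b ∧ (2 * t : ℤ) ≤ b - a ∧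
      ∀ d : ℤ, a ≤ d → d ≤ b → MajFinal (E t) (i + (d : ZMod n)) :=
  maj_final_in_long_final_interval_general n E hE t i h
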